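/- arXiv:1005.5558 — 2 statements merged into one kernel-verified Lean document; each statement's English description precedes it below -/
import Mathlib

section
/- Let M be a 5×5 antisymmetric matrix over a commutative ring. For i = 1,…,5 let pfᵢ denote the Pfaffian of the 4×4 antisymmetric matrix obtained from M by deleting the i-th row and i-th column (where the Pfaffian of a 4×4 antisymmetric matrix (aⱼₖ) is a₁₂a₃₄ − a₁₃a₂₄ + a₁₄a₂₃). Then for every row index i, one has Σⱼ (−1)ʲ · M(i,j) · pfⱼ = 0. -/
open Matrix

/-- The Pfaffian of a 4×4 antisymmetric matrix. -/
def pfaffian4 {R : Type*} [CommRing R] (N : Matrix (Fin 4) (Fin 4) R) : R :=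
  N 0 1 * N 2 3 - N 0 2 * N 1 3 + N 0 3 * N 1 2

/-- The 4×4 submatrix of a 5×5 matrix obtained by deleting the `i`-th row and column. -/
def deleteRC {R : Type*} [CommRing R] (M : Matrix (Fin 5) (Fin 5) R) (i : Fin 5) :
    Matrix (Fin 4) (Fin 4) R :=
  M.submatrix i.succAbove i.succAbove

/-- The vector of signed maximal Pfaffians of a 5×5 antisymmetric matrix lies in
the kernel of the matrix. -/
theorem signed_pfaffians_in_kernel (R : Type*) [CommRing R]
    (M : Matrix (Fin 5) (Fin 5) R) (hM : Mᵀ = -M) (hdiag : ∀ i, M i i = 0) :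
    ∀ i : Fin 5, ∑ j : Fin 5, (-1 : R) ^ (j : ℕ) * M i j * pfaffian4 (deleteRC M j) = 0 := by
  have h : ∀ i j : Fin 5, M j i = -M i j := fun i j => by
    have := congrFun (congrFun hM i) j; simpa using this
  have pf0 : pfaffian4 (deleteRC M 0) = M 1 2 * M 3 4 - M 1 3 * M 2 4 + M 1 4 * M 2 3 := rfl
  have pf1 : pfaffian4 (deleteRC M 1) = M 0 2 * M 3 4 - M 0 3 * M 2 4 + M 0 4 * M 2 3 := rfl
  have pf2 : pfaffian4 (deleteRC M 2) = M 0 1 * M 3 4 - M 0 3 * M 1 4 + M 0 4 * M 1 3 := rfl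
  have pf3 : pfaffian4 (deleteRC M 3) = M 0 1 * M 2 4 - M 0 2 * M 1 4 + M 0 4 * M 1 2 := rfl
  have pf4 : pfaffian4 (deleteRC M 4) = M 0 1 * M 2 3 - M 0 2 * M 1 3 + M 0 3 * M 1 2 := rfl
  have key : ∀ i : Fin 5,
      ∑ j : Fin 5, (-1 : R) ^ (j : ℕ) * M i j * pfaffian4 (deleteRC M j)
        = M i 0 * pfaffian4 (deleteRC M 0) - M i 1 * pfaffian4 (deleteRC M 1)
          + M i 2 * pfaffian4 (deleteRC M 2) - M i 3 * pfaffian4 (deleteRC M 3)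
          + M i 4 * pfaffian4 (deleteRC M 4) := by
    intro i
    rw [Fin.sum_univ_five]
    norm_num [show ((0 : Fin 5) : ℕ) = 0 from rfl, show ((1 : Fin 5) : ℕ) = 1 from rfl,
      show ((2 : Fin 5) : ℕ) = 2 from rfl, show ((3 : Fin 5) : ℕ) = 3 from rfl,
      show ((4 : Fin 5) : ℕ) = 4 from rfl]
    ring
  intro i
  fin_cases i
  · show ∑ j : Fin 5, (-1 : R) ^ (j : ℕ) * M 0 j * pfaffian4 (deleteRC M j) = 0
    simp only [key, pf0, pf1, pf2, pf3, pf4, hdiag, h 0 1, h 0 2, h 0 3, h 0 4, h 1 2,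
      h 1 3, h 1 4, h 2 3, h 2 4, h 3 4]; ring
  · show ∑ j : Fin 5, (-1 : R) ^ (j : ℕ) * M 1 j * pfaffian4 (deleteRC M j) = 0
    simp only [key, pf0, pf1, pf2, pf3, pf4, hdiag, h 0 1, h 0 2, h 0 3, h 0 4, h 1 2,
      h 1 3, h 1 4, h 2 3, h 2 4, h 3 4]; ring
  · show ∑ j : Fin 5, (-1 : R) ^ (j : ℕ) * M 2 j * pfaffian4 (deleteRC M j) = 0
    simp only [key, pf0, pf1, pf2, pf3, pf4, hdiag, h 0 1, h 0 2, h 0 3, h 0 4, h 1 2,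
      h 1 3, h 1 4, h 2 3, h 2 4, h 3 4]; ring
  · show ∑ j : Fin 5, (-1 : R) ^ (j : ℕ) * M 3 j * pfaffian4 (deleteRC M j) = 0
    simp only [key, pf0, pf1, pf2, pf3, pf4, hdiag, h 0 1, h 0 2, h 0 3, h 0 4, h 1 2,
      h 1 3, h 1 4, h 2 3, h 2 4, h 3 4]; ring
  · show ∑ j : Fin 5, (-1 : R) ^ (j : ℕ) * M 4 j * pfaffian4 (deleteRC M j) = 0
    simp only [key, pf0, pf1, pf2, pf3, pf4, hdiag, h 0 1, h 0 2, h 0 3, h 0 4, h 1 2,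
      h 1 3, h 1 4, h 2 3, h 2 4, h 3 4]; ring
end

section
/- Let R be a commutative ring, h₁, h₂, h₃, l₁, l₂, l₃, l₄ ∈ R, and consider the 5×5 antisymmetric 'Jerry' matrix J with upper-triangular entries J₁₂ = l₁, J₁₃ = l₂, J₁₄ = l₃, J₁₅ = 0, J₂₃ = 0, J₂₄ = l₃, J₂₅ = l₄, J₃₄ = h₁, J₃₅ = h₂, J₄₅ = h₃. Then each of the five 4×4 Pfaffians of J lies in the ideal generated by l₁, l₂, l₃, l₄. -/
theorem pfaffian4_mem_of_mem {R : Type*} [CommRing R] {I : Ideal R}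
    (N : Matrix (Fin 4) (Fin 4) R) (h₀₁ : N 0 1 ∈ I ∨ N 2 3 ∈ I)
    (h₀₂ : N 0 2 ∈ I ∨ N 1 3 ∈ I) (h₀₃ : N 0 3 ∈ I ∨ N 1 2 ∈ I) :
    pfaffian4 N ∈ I := by
  have mul_mem {a b : R} (h : a ∈ I ∨ b ∈ I) : a * b ∈ I :=
    h.elim (I.mul_mem_right b) (I.mul_mem_left a)
  exact add_mem (sub_mem (mul_mem h₀₁) (mul_mem h₀₂)) (mul_mem h₀₃)

/-- Each 4×4 Pfaffian of the `Jerry` matrix lies in the ideal `(l₁, l₂, l₃, l₄)`. -/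
theorem jerry_pfaffians_in_ideal (R : Type*) [CommRing R]
    (h₁ h₂ h₃ l₁ l₂ l₃ l₄ : R) :
    let J : Matrix (Fin 5) (Fin 5) R :=
      !![0, l₁, l₂, l₃, 0;
         -l₁, 0, 0, l₃, l₄;
         -l₂, 0, 0, h₁, h₂;
         -l₃, -l₃, -h₁, 0, h₃;
         0, -l₄, -h₂, -h₃, 0]
    ∀ i : Fin 5, pfaffian4 (deleteRC J i) ∈ Ideal.span {l₁, l₂, l₃, l₄} := by
  intro J i
  have hl : l₁ ∈ Ideal.span {l₁, l₂, l₃, l₄} ∧ l₂ ∈ Ideal.span {l₁, l₂, l₃, l₄} ∧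
      l₃ ∈ Ideal.span {l₁, l₂, l₃, l₄} ∧ l₄ ∈ Ideal.span {l₁, l₂, l₃, l₄} := by
    refine ⟨?_, ?_, ?_, ?_⟩ <;> exact Ideal.subset_span (by simp)
  -- Every monomial of every 4×4 Pfaffian of `J` has a factor `0` or `lⱼ`.
  fin_cases i <;> apply pfaffian4_mem_of_mem <;> simp [J, deleteRC, Fin.succAbove, hl]
end
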